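/- Let T1 and T2 be trees on the same label set 𝒳 and let X ⊆ 𝒳. Then T1 − X = T2 − X if and only if X is a hitting set of confset(T1, T2). -/
import Mathlib


/-!
Common framework: rooted binary trees with leaves bijectively labeled by a
finite label set, leaf removal, restriction, the leaf-removal distance `d_LR`,
compatibility, leaf-disagreements, triplets, LPR moves, etc.
-/

universe u

/-- A rooted binary tree whose leaves carry labels from `α`. -/
inductive LTree (α : Type u) : Type u where
  | leaf : α → LTree α
  | node : LTree α → LTree α → LTree α

namespace LTree

variable {α : Type u} [DecidableEq α]

/-- The set of leaf labels of a tree. -/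
def labels : LTree α → Finset α
  | leaf a => {a}
  | node l r => labels l ∪ labels r

/-- A tree is `Good` when its leaves carry pairwise distinct labels
(i.e. the leaves are bijectively labeled). -/
def Good : LTree α → Prop
  | leaf _ => True
  | node l r => Good l ∧ Good r ∧ Disjoint (labels l) (labels r)

/-- `T` is a (rooted binary, uniquely leaf-labeled) tree on label set `𝒳`. -/
def IsTreeOn (T : LTree α) (𝒳 : Finset α) : Prop :=
  Good T ∧ labels T = 𝒳

/-- Equality of rooted trees: children of a node are unordered. -/
inductive Iso : LTree α → LTree α → Prop
  | leaf (a : α) : Iso (leaf a) (leaf a)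
  | node {l₁ r₁ l₂ r₂ : LTree α} :
      Iso l₁ l₂ → Iso r₁ r₂ → Iso (node l₁ r₁) (node l₂ r₂)
  | swap {l₁ r₁ l₂ r₂ : LTree α} :
      Iso l₁ r₂ → Iso r₁ l₂ → Iso (node l₁ r₁) (node l₂ r₂)

/-- Equality of possibly empty trees (`none` is the empty tree). -/
def OptIso : Option (LTree α) → Option (LTree α) → Prop
  | none, none => True
  | some t₁, some t₂ => Iso t₁ t₂
  | _, _ => False

/-- Restriction `T|_S`: keep exactly the leaves with labels in `S`, suppressing
the resulting degree-two vertices and degree-one roots; the result is `none`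
when no leaf survives. -/
def restrict : LTree α → Finset α → Option (LTree α)
  | leaf a, S => if a ∈ S then some (leaf a) else none
  | node l r, S =>
    match restrict l S, restrict r S with
    | some l', some r' => some (node l' r')
    | some l', none => some l'
    | none, some r' => some r'
    | none, none => none

/-- `T − X`: remove from `T` every leaf whose label lies in `X`. -/
def remove (T : LTree α) (X : Finset α) : Option (LTree α) :=
  restrict T (labels T \ X)

/-- The leaf-removal distance `d_LR(T₁,T₂)`: the minimum number of labels
whose removal makes the two trees equal. -/
noncomputable def dLR (T₁ T₂ : LTree α) : ℕ :=
  sInf {n | ∃ X : Finset α, X ⊆ labels T₁ ∪ labels T₂ ∧ X.card = n ∧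
    OptIso (remove T₁ X) (remove T₂ X)}

def labelsO : Option (LTree α) → Finset α
  | none => ∅
  | some t => labels t

def GoodO : Option (LTree α) → Prop
  | none => True
  | some t => Good t

def restrictO : Option (LTree α) → Finset α → Option (LTree α)
  | none, _ => none
  | some t, S => restrict t S

/-- A family of (possibly empty) trees is compatible if there is a single tree,
on the union of their label sets, which displays all of them. -/
def CompatibleFamO {ι : Type*} (f : ι → Option (LTree α)) : Prop :=
  ∃ TO : Option (LTree α), GoodO TO ∧
    (↑(labelsO TO) : Set α) = (⋃ i, ↑(labelsO (f i))) ∧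
    ∀ i, OptIso (restrictO TO (labelsO (f i))) (f i)

/-- A family of trees is compatible if a single tree displays all of them. -/
def CompatibleFam {ι : Type*} (𝒯 : ι → LTree α) : Prop :=
  CompatibleFamO fun i => some (𝒯 i)

/-- `X` is a leaf-disagreement for the family `𝒯`: removing `X i` from `𝒯 i`
yields a compatible family. -/
def IsLeafDisagreement {ι : Type*} (𝒯 : ι → LTree α) (X : ι → Finset α) : Prop :=
  CompatibleFamO fun i => remove (𝒯 i) (X i)

/-- `X'` is a label-disagreement for the family `𝒯`. -/
def IsLabelDisagreement {ι : Type*} (𝒯 : ι → LTree α) (X' : Finset α) : Prop :=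
  CompatibleFamO fun i => remove (𝒯 i) X'

/-- `MASTRL 𝒯`: the minimum size of a leaf-disagreement for `𝒯`. -/
noncomputable def MASTRL {t : ℕ} (𝒯 : Fin t → LTree α) : ℕ :=
  sInf {v | ∃ X : Fin t → Finset α, (∀ i, X i ⊆ labels (𝒯 i)) ∧
    (∑ i, (X i).card) = v ∧ IsLeafDisagreement 𝒯 X}

/-- The triplet `ab|c` (as a tree). -/
def tripletTree (a b c : α) : LTree α := node (node (leaf a) (leaf b)) (leaf c)

/-- A rooted triplet: a tree with exactly three (distinctly labeled) leaves. -/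
def IsTriplet (R : LTree α) : Prop := Good R ∧ (labels R).card = 3

/-- `ab|c` is a triplet of `T`, i.e. `T|_{a,b,c} = ab|c`. -/
def IsTripletOf (T : LTree α) (a b c : α) : Prop :=
  OptIso (restrict T {a, b, c}) (some (tripletTree a b c))

/-- `tr(T)`: the triplet decomposition of `T`. -/
def trSet (T : LTree α) : Set (LTree α) :=
  {R | ∃ a b c : α, R = tripletTree a b c ∧ IsTripletOf T a b c}

/-- A set of trees is compatible: some tree on the union of the label sets
displays every member. -/
def CompatibleSet (S : Set (LTree α)) : Prop :=
  ∃ TO : Option (LTree α), GoodO TO ∧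
    (↑(labelsO TO) : Set α) = (⋃ R ∈ S, ↑(labels R)) ∧
    ∀ R ∈ S, OptIso (restrictO TO (labels R)) (some R)

/-- `MINRTI ℛ`: the minimum number of triplets to delete from `ℛ` so that the
remaining triplets are compatible. -/
noncomputable def MINRTI {t : ℕ} (R : Fin t → LTree α) : ℕ :=
  sInf {m | ∃ s : Finset (Fin t), s.card = m ∧
    CompatibleFam (fun i : {i : Fin t // i ∉ s} => R i.1)}

/-- Graft the leaf `x` at the position (edge) addressed by `p` in `T`.
The empty address grafts `x` above the root of `T` (the `⊥` case); the address
of an internal/leaf vertex `v` grafts `x` on the edge between `v` and its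
parent.  `none` when the address is invalid. -/
def graftAt (x : α) : LTree α → List Bool → Option (LTree α)
  | T, [] => some (node (leaf x) T)
  | leaf _, _ :: _ => none
  | node l r, b :: p =>
    if b then (graftAt x l p).map (fun l' => node l' r)
    else (graftAt x r p).map (fun r' => node l r')

/-- `T'` is obtained from `T` by a single LPR (leaf prune-and-regraft) move on
the leaf `x`: prune `x` from `T` and regraft it, either on an edge of
`T − {x}` or above its root. -/
def LPRStep (x : α) (T T' : LTree α) : Prop :=
  (remove T {x} = none ∧ T' = leaf x) ∨
  ∃ T₀ p, remove T {x} = some T₀ ∧ graftAt x T₀ p = some T'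

/-- `TurnsInto L T T'`: the LPR sequence with (ordered) leaf list `L` turns
`T` into `T'`. -/
inductive TurnsInto : List α → LTree α → LTree α → Prop
  | nil {T T' : LTree α} : Iso T T' → TurnsInto [] T T'
  | cons {x : α} {xs : List α} {T T'' T' : LTree α} :
      LPRStep x T T'' → TurnsInto xs T'' T' → TurnsInto (x :: xs) T T'

/-- `confset(T₁,T₂)`: the collection of 3-label sets `{a,b,c}` such that
`T₁` contains a triplet on `{a,b,c}` conflicting with a triplet of `T₂`. -/
def confset (T₁ T₂ : LTree α) : Set (Finset α) :=
  {s | ∃ a b c : α, s = {a, b, c} ∧ IsTripletOf T₁ a b c ∧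
    (IsTripletOf T₂ a c b ∨ IsTripletOf T₂ b c a)}

/-- `X` is a minimal disagreement between `T₁` and `T₂`. -/
def MinimalDisagreement (T₁ T₂ : LTree α) (X : Finset α) : Prop :=
  X ⊆ labels T₁ ∪ labels T₂ ∧
  OptIso (remove T₁ X) (remove T₂ X) ∧
  ∀ X' ⊂ X, ¬ OptIso (remove T₁ X') (remove T₂ X')

/-- `u` is (the rooted subtree hanging at) a node of `T`. -/
inductive IsSubtree : LTree α → LTree α → Prop
  | refl (T : LTree α) : IsSubtree T T
  | left {u l r : LTree α} : IsSubtree u l → IsSubtree u (node l r)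
  | right {u l r : LTree α} : IsSubtree u r → IsSubtree u (node l r)

/-- `u` is the least common ancestor in `T` of the labels in `Z`. -/
def IsLCA (T : LTree α) (Z : Finset α) (u : LTree α) : Prop :=
  IsSubtree u T ∧ Z ⊆ labels u ∧
    ∀ w, IsSubtree w T → Z ⊆ labels w → IsSubtree u w

end LTree

section Aux
set_option linter.unusedSectionVars false
namespace LTree
variable {α : Type u} [DecidableEq α]

/-- Combine two optional trees as the two children of a node. -/
def glue : Option (LTree α) → Option (LTree α) → Option (LTree α)
  | some l, some r => some (.node l r)
  | some l, none => some l
  | none, some r => some r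
  | none, none => none

theorem restrict_node (l r : LTree α) (S : Finset α) :
    restrict (node l r) S = glue (restrict l S) (restrict r S) := by
  cases hl : restrict l S <;> cases hr : restrict r S <;>
    simp [restrict, glue, hl, hr]

theorem glue_none_right (A : Option (LTree α)) : glue A none = A := by
  cases A <;> rfl

theorem glue_none_left (A : Option (LTree α)) : glue none A = A := by
  cases A <;> rfl

theorem labels_nonempty (T : LTree α) : (labels T).Nonempty := by
  induction T with
  | leaf a => exact ⟨a, Finset.mem_singleton_self a⟩
  | node l r ihl ihr =>
    obtain ⟨x, hx⟩ := ihl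
    exact ⟨x, Finset.mem_union_left _ hx⟩

theorem iso_refl : ∀ T : LTree α, Iso T T
  | leaf a => Iso.leaf a
  | node l r => Iso.node (iso_refl l) (iso_refl r)

theorem iso_symm {T₁ T₂ : LTree α} (h : Iso T₁ T₂) : Iso T₂ T₁ := by
  induction h with
  | leaf a => exact Iso.leaf a
  | node h1 h2 ih1 ih2 => exact Iso.node ih1 ih2
  | swap h1 h2 ih1 ih2 => exact Iso.swap ih2 ih1

theorem iso_trans {T₁ T₂ T₃ : LTree α} (h : Iso T₁ T₂) : Iso T₂ T₃ → Iso T₁ T₃ := by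
  induction h generalizing T₃ with
  | leaf a => exact fun h' => h'
  | node h1 h2 ih1 ih2 =>
    intro h'
    cases h' with
    | node g1 g2 => exact Iso.node (ih1 g1) (ih2 g2)
    | swap g1 g2 => exact Iso.swap (ih1 g1) (ih2 g2)
  | swap h1 h2 ih1 ih2 =>
    intro h'
    cases h' with
    | node g1 g2 => exact Iso.swap (ih1 g2) (ih2 g1)
    | swap g1 g2 => exact Iso.node (ih1 g2) (ih2 g1)

theorem labels_of_iso {T₁ T₂ : LTree α} (h : Iso T₁ T₂) : labels T₁ = labels T₂ := by
  induction h with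
  | leaf a => rfl
  | node h1 h2 ih1 ih2 => simp [labels, ih1, ih2]
  | swap h1 h2 ih1 ih2 => simp [labels, ih1, ih2, Finset.union_comm]

theorem good_of_iso {T₁ T₂ : LTree α} (h : Iso T₁ T₂) (hg : Good T₁) : Good T₂ := by
  induction h with
  | leaf a => trivial
  | node h1 h2 ih1 ih2 =>
    obtain ⟨g1, g2, hd⟩ := hg
    exact ⟨ih1 g1, ih2 g2, by rw [← labels_of_iso h1, ← labels_of_iso h2]; exact hd⟩
  | swap h1 h2 ih1 ih2 =>
    obtain ⟨g1, g2, hd⟩ := hg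
    exact ⟨ih2 g2, ih1 g1, by rw [← labels_of_iso h2, ← labels_of_iso h1]; exact hd.symm⟩

theorem labelsO_glue (A B : Option (LTree α)) : labelsO (glue A B) = labelsO A ∪ labelsO B := by
  cases A <;> cases B <;> simp [glue, labelsO, labels]

theorem labelsO_restrict (T : LTree α) (S : Finset α) :
    labelsO (restrict T S) = labels T ∩ S := by
  induction T with
  | leaf a =>
    by_cases h : a ∈ S <;>
      simp [restrict, labelsO, labels, h, Finset.singleton_inter_of_mem,
        Finset.singleton_inter_of_notMem]
  | node l r ihl ihr =>
    rw [restrict_node, labelsO_glue, ihl, ihr, labels]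
    exact (Finset.union_inter_distrib_right ..).symm

theorem restrict_eq_none_iff {T : LTree α} {S : Finset α} :
    restrict T S = none ↔ labels T ∩ S = ∅ := by
  constructor
  · intro h
    have h2 := labelsO_restrict T S
    rw [h] at h2
    exact h2.symm
  · intro h
    cases hr : restrict T S with
    | none => rfl
    | some t =>
      exfalso
      have hl := labelsO_restrict T S
      rw [hr, h] at hl
      exact (labels_nonempty t).ne_empty hl

theorem good_restrict {T : LTree α} (hg : Good T) (S : Finset α) : GoodO (restrict T S) := by
  induction T with
  | leaf a => by_cases h : a ∈ S <;> simp [restrict, h, GoodO, Good]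
  | node l r ihl ihr =>
    obtain ⟨g1, g2, hd⟩ := hg
    have h1 := ihl g1
    have h2 := ihr g2
    have e1 := labelsO_restrict l S
    have e2 := labelsO_restrict r S
    rw [restrict_node]
    cases hl : restrict l S with
    | none =>
      cases hr : restrict r S with
      | none => trivial
      | some tr => rw [hr] at h2; exact h2
    | some tl =>
      rw [hl] at h1 e1
      cases hr : restrict r S with
      | none => exact h1
      | some tr =>
        rw [hr] at h2 e2
        refine ⟨h1, h2, ?_⟩
        rw [show labelsO (some tl) = labels tl from rfl] at e1
        rw [show labelsO (some tr) = labels tr from rfl] at e2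
        rw [e1, e2]
        exact hd.mono Finset.inter_subset_left Finset.inter_subset_left

theorem restrictO_glue (A B : Option (LTree α)) (S : Finset α) :
    restrictO (glue A B) S = glue (restrictO A S) (restrictO B S) := by
  cases A <;> cases B
  · rfl
  · exact (glue_none_left _).symm
  · exact (glue_none_right _).symm
  · exact restrict_node _ _ S

theorem restrictO_restrict (T : LTree α) (S S' : Finset α) :
    restrictO (restrict T S) S' = restrict T (S ∩ S') := by
  induction T with
  | leaf a =>
    by_cases h : a ∈ S <;> by_cases h' : a ∈ S' <;>
      simp [restrict, restrictO, h, h', Finset.mem_inter]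
  | node l r ihl ihr =>
    rw [restrict_node, restrictO_glue, ihl, ihr, restrict_node]

theorem optIso_glue {A A' B B' : Option (LTree α)} (h1 : OptIso A A') (h2 : OptIso B B') :
    OptIso (glue A B) (glue A' B') := by
  cases A <;> cases A' <;> cases B <;> cases B' <;>
    first
      | exact h1.elim
      | exact h2.elim
      | trivial
      | exact h1
      | exact h2
      | exact Iso.node h1 h2

theorem optIso_glue_swap {A A' B B' : Option (LTree α)} (h1 : OptIso A B') (h2 : OptIso B A') :
    OptIso (glue A B) (glue A' B') := by
  cases A <;> cases A' <;> cases B <;> cases B' <;>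
    first
      | exact h1.elim
      | exact h2.elim
      | trivial
      | exact h1
      | exact h2
      | exact Iso.swap h1 h2

theorem iso_restrict {T₁ T₂ : LTree α} (h : Iso T₁ T₂) (S : Finset α) :
    OptIso (restrict T₁ S) (restrict T₂ S) := by
  induction h with
  | leaf a =>
    by_cases hm : a ∈ S <;> simp [restrict, hm, OptIso]
    exact Iso.leaf a
  | node h1 h2 ih1 ih2 =>
    rw [restrict_node, restrict_node]; exact optIso_glue ih1 ih2
  | swap h1 h2 ih1 ih2 =>
    rw [restrict_node, restrict_node]; exact optIso_glue_swap ih1 ih2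

theorem optIso_refl (A : Option (LTree α)) : OptIso A A := by
  cases A
  · trivial
  · exact iso_refl _

theorem optIso_symm {A B : Option (LTree α)} (h : OptIso A B) : OptIso B A := by
  cases A <;> cases B
  · trivial
  · exact h.elim
  · exact h.elim
  · exact iso_symm h

theorem optIso_trans {A B C : Option (LTree α)} (h1 : OptIso A B) (h2 : OptIso B C) :
    OptIso A C := by
  cases A <;> cases B <;> cases C <;>
    first
      | exact h1.elim
      | exact h2.elim
      | trivial
      | exact iso_trans h1 h2

theorem restrictO_optIso {A B : Option (LTree α)} (h : OptIso A B) (S : Finset α) :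
    OptIso (restrictO A S) (restrictO B S) := by
  cases A <;> cases B
  · trivial
  · exact h.elim
  · exact h.elim
  · exact iso_restrict h S

theorem good_singleton {t : LTree α} {a : α} (hg : Good t) (hl : labels t = {a}) :
    t = leaf a := by
  cases t with
  | leaf x =>
    simp only [labels, Finset.singleton_inj] at hl
    rw [hl]
  | node l r =>
    exfalso
    obtain ⟨g1, g2, hd⟩ := hg
    obtain ⟨x, hx⟩ := labels_nonempty l
    obtain ⟨y, hy⟩ := labels_nonempty r
    simp only [labels] at hl
    have hx' : x ∈ ({a} : Finset α) := hl ▸ Finset.mem_union_left _ hx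
    have hy' : y ∈ ({a} : Finset α) := hl ▸ Finset.mem_union_right _ hy
    simp only [Finset.mem_singleton] at hx' hy'
    subst hx'; subst hy'
    exact Finset.disjoint_left.mp hd hx hy

theorem good_pair {t : LTree α} {a b : α} (hg : Good t) (hl : labels t = {a, b})
    (hab : a ≠ b) : Iso t (node (leaf a) (leaf b)) := by
  cases t with
  | leaf x =>
    exfalso
    apply hab
    have ha : a ∈ labels (leaf x) := by rw [hl]; simp
    have hb : b ∈ labels (leaf x) := by rw [hl]; simp
    simp only [labels, Finset.mem_singleton] at ha hb
    rw [ha, hb]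
  | node l r =>
    obtain ⟨g1, g2, hd⟩ := hg
    simp only [labels] at hl
    have sub_l : labels l ⊆ {a, b} := by rw [← hl]; exact Finset.subset_union_left
    have sub_r : labels r ⊆ {a, b} := by rw [← hl]; exact Finset.subset_union_right
    by_cases hal : a ∈ labels l <;> by_cases hbl : b ∈ labels l
    · exfalso
      obtain ⟨y, hy⟩ := labels_nonempty r
      have hy2 := sub_r hy
      simp only [Finset.mem_insert, Finset.mem_singleton] at hy2
      rcases hy2 with rfl | rfl
      · exact Finset.disjoint_left.mp hd hal hy
      · exact Finset.disjoint_left.mp hd hbl hy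
    · have hbr : b ∈ labels r := by
        have : b ∈ labels l ∪ labels r := by rw [hl]; simp
        exact (Finset.mem_union.mp this).resolve_left hbl
      have hll : labels l = {a} := by
        apply Finset.Subset.antisymm
        · intro x hx
          have hx2 := sub_l hx
          simp only [Finset.mem_insert, Finset.mem_singleton] at hx2 ⊢
          rcases hx2 with rfl | rfl
          · rfl
          · exact absurd hx hbl
        · simp [hal]
      have hrr : labels r = {b} := by
        apply Finset.Subset.antisymm
        · intro x hx
          have hx2 := sub_r hx
          simp only [Finset.mem_insert, Finset.mem_singleton] at hx2 ⊢
          rcases hx2 with rfl | rfl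
          · exact absurd hx (Finset.disjoint_left.mp hd hal)
          · rfl
        · simp [hbr]
      rw [good_singleton g1 hll, good_singleton g2 hrr]
      exact Iso.node (Iso.leaf a) (Iso.leaf b)
    · have har : a ∈ labels r := by
        have : a ∈ labels l ∪ labels r := by rw [hl]; simp
        exact (Finset.mem_union.mp this).resolve_left hal
      have hll : labels l = {b} := by
        apply Finset.Subset.antisymm
        · intro x hx
          have hx2 := sub_l hx
          simp only [Finset.mem_insert, Finset.mem_singleton] at hx2 ⊢
          rcases hx2 with rfl | rfl
          · exact absurd hx hal
          · rfl
        · simp [hbl]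
      have hrr : labels r = {a} := by
        apply Finset.Subset.antisymm
        · intro x hx
          have hx2 := sub_r hx
          simp only [Finset.mem_insert, Finset.mem_singleton] at hx2 ⊢
          rcases hx2 with rfl | rfl
          · rfl
          · exact absurd hx (Finset.disjoint_left.mp hd hbl)
        · simp [har]
      rw [good_singleton g1 hll, good_singleton g2 hrr]
      exact Iso.swap (Iso.leaf b) (Iso.leaf a)
    · exfalso
      obtain ⟨y, hy⟩ := labels_nonempty l
      have hy2 := sub_l hy
      simp only [Finset.mem_insert, Finset.mem_singleton] at hy2
      rcases hy2 with rfl | rfl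
      · exact hal hy
      · exact hbl hy

theorem labels_tripletTree (a b c : α) : labels (tripletTree a b c) = {a, b, c} := by
  ext x
  simp [tripletTree, labels, or_assoc]

theorem good_three_aux {l r : LTree α} {a b c : α} (hg : Good (node l r))
    (hl : labels (node l r) = {a, b, c}) (hab : a ≠ b)
    (ha : a ∈ labels l) (hb : b ∈ labels l) (hc : c ∈ labels r) :
    Iso (node l r) (tripletTree a b c) := by
  obtain ⟨g1, g2, hd⟩ := hg
  simp only [labels] at hl
  have hll : labels l = {a, b} := by
    apply Finset.Subset.antisymm
    · intro x hx
      have hx3 : x ∈ ({a, b, c} : Finset α) := by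
        rw [← hl]; exact Finset.mem_union_left _ hx
      simp only [Finset.mem_insert, Finset.mem_singleton] at hx3 ⊢
      rcases hx3 with h | h | rfl
      · exact Or.inl h
      · exact Or.inr h
      · exact absurd hc (Finset.disjoint_left.mp hd hx)
    · intro x hx
      simp only [Finset.mem_insert, Finset.mem_singleton] at hx
      rcases hx with rfl | rfl <;> assumption
  have hrr : labels r = {c} := by
    apply Finset.Subset.antisymm
    · intro x hx
      have hx3 : x ∈ ({a, b, c} : Finset α) := by
        rw [← hl]; exact Finset.mem_union_right _ hx
      simp only [Finset.mem_insert, Finset.mem_singleton] at hx3 ⊢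
      rcases hx3 with rfl | rfl | h
      · exact absurd hx (Finset.disjoint_left.mp hd ha)
      · exact absurd hx (Finset.disjoint_left.mp hd hb)
      · exact h
    · simp [hc]
  rw [good_singleton g2 hrr]
  exact Iso.node (good_pair g1 hll hab) (Iso.leaf c)

theorem good_card_three {t : LTree α} {a b c : α} (hg : Good t) (hl : labels t = {a, b, c})
    (hab : a ≠ b) (hac : a ≠ c) (hbc : b ≠ c) :
    Iso t (tripletTree a b c) ∨ Iso t (tripletTree a c b) ∨ Iso t (tripletTree b c a) := by
  cases t with
  | leaf x =>
    exfalso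
    have ha : a ∈ labels (leaf x) := by rw [hl]; simp
    have hb : b ∈ labels (leaf x) := by rw [hl]; simp
    simp only [labels, Finset.mem_singleton] at ha hb
    exact hab (ha.trans hb.symm)
  | node l r =>
    have hmem : ∀ x, x ∈ ({a, b, c} : Finset α) → x ∈ labels l ∨ x ∈ labels r := by
      intro x hx
      rw [← hl] at hx
      exact Finset.mem_union.mp hx
    have hmem' : ∀ x, x ∈ labels l ∨ x ∈ labels r → x ∈ ({a, b, c} : Finset α) := by
      intro x hx
      rw [← hl]
      exact Finset.mem_union.mpr hx
    obtain ⟨g1, g2, hd⟩ := hg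
    have hg' : Good (node l r) := ⟨g1, g2, hd⟩
    have hgc : Good (node r l) := ⟨g2, g1, hd.symm⟩
    have hswap : Iso (node l r) (node r l) := Iso.swap (iso_refl l) (iso_refl r)
    have hlc : labels (node r l) = labels (node l r) := by
      simp only [labels]; exact Finset.union_comm _ _
    have sacb : ({a, c, b} : Finset α) = {a, b, c} := by
      ext x; simp only [Finset.mem_insert, Finset.mem_singleton]; tauto
    have sbca : ({b, c, a} : Finset α) = {a, b, c} := by
      ext x; simp only [Finset.mem_insert, Finset.mem_singleton]; tauto
    rcases hmem a (by simp) with ha | ha <;> rcases hmem b (by simp) with hb | hb <;>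
      rcases hmem c (by simp) with hc | hc
    · exfalso
      obtain ⟨y, hy⟩ := labels_nonempty r
      have := hmem' y (Or.inr hy)
      simp only [Finset.mem_insert, Finset.mem_singleton] at this
      rcases this with rfl | rfl | rfl
      · exact Finset.disjoint_left.mp hd ha hy
      · exact Finset.disjoint_left.mp hd hb hy
      · exact Finset.disjoint_left.mp hd hc hy
    · exact Or.inl (good_three_aux hg' hl hab ha hb hc)
    · exact Or.inr (Or.inl
        (good_three_aux hg' (by rw [hl, sacb]) hac ha hc hb))
    · refine Or.inr (Or.inr (iso_trans hswap ?_))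
      exact good_three_aux hgc (by rw [hlc, hl, sbca]) hbc hb hc ha
    · exact Or.inr (Or.inr
        (good_three_aux hg' (by rw [hl, sbca]) hbc hb hc ha))
    · refine Or.inr (Or.inl (iso_trans hswap ?_))
      exact good_three_aux hgc (by rw [hlc, hl, sacb]) hac ha hc hb
    · refine Or.inl (iso_trans hswap ?_)
      exact good_three_aux hgc (by rw [hlc, hl]) hab ha hb hc
    · exfalso
      obtain ⟨y, hy⟩ := labels_nonempty l
      have := hmem' y (Or.inl hy)
      simp only [Finset.mem_insert, Finset.mem_singleton] at this
      rcases this with rfl | rfl | rfl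
      · exact Finset.disjoint_left.mp hd hy ha
      · exact Finset.disjoint_left.mp hd hy hb
      · exact Finset.disjoint_left.mp hd hy hc

theorem iso_tripletTree_inv {a b c x y z : α}
    (h : Iso (tripletTree a b c) (tripletTree x y z)) :
    ({a, b} : Finset α) = {x, y} ∧ c = z := by
  cases h with
  | node h1 h2 =>
    cases h2
    refine ⟨?_, rfl⟩
    have := labels_of_iso h1
    simpa [labels] using this
  | swap h1 h2 => cases h1

theorem iso_node_tripletTree {u v : LTree α} {x y z : α}
    (h : Iso (node u v) (tripletTree x y z)) :
    (labels u = {x, y} ∧ labels v = {z}) ∨ (labels u = {z} ∧ labels v = {x, y}) := by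
  cases h with
  | node h1 h2 =>
    left
    exact ⟨by simpa [labels] using labels_of_iso h1, by simpa [labels] using labels_of_iso h2⟩
  | swap h1 h2 =>
    right
    exact ⟨by simpa [labels] using labels_of_iso h1, by simpa [labels] using labels_of_iso h2⟩

theorem isTripletOf_iff {T : LTree α} {a b c : α} :
    IsTripletOf T a b c ↔
      ∃ t, restrict T {a, b, c} = some t ∧ Iso t (tripletTree a b c) := by
  unfold IsTripletOf
  cases h : restrict T {a, b, c} with
  | none =>
    constructor
    · intro h'; exact h'.elim
    · rintro ⟨t, ht, -⟩; cases ht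
  | some t =>
    constructor
    · intro h'; exact ⟨t, rfl, h'⟩
    · rintro ⟨t', ht', hi⟩
      cases ht'
      exact hi

theorem good_tripletTree {a b c : α} (h : Good (tripletTree a b c)) :
    a ≠ b ∧ a ≠ c ∧ b ≠ c := by
  obtain ⟨⟨-, -, hd1⟩, -, hd2⟩ := h
  have hab : a ≠ b := by
    intro e
    exact Finset.disjoint_left.mp hd1 (Finset.mem_singleton_self a) (by simp [labels, e])
  have h2 : c ∉ labels (node (leaf a) (leaf b)) := Finset.disjoint_right.mp hd2 (by simp [labels])
  simp only [labels, Finset.mem_union, Finset.mem_singleton, not_or] at h2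
  exact ⟨hab, Ne.symm h2.1, Ne.symm h2.2⟩

theorem triplet_facts {T : LTree α} {a b c : α} (hg : Good T) (h : IsTripletOf T a b c) :
    a ∈ labels T ∧ b ∈ labels T ∧ c ∈ labels T ∧ a ≠ b ∧ a ≠ c ∧ b ≠ c := by
  obtain ⟨t, ht, hiso⟩ := isTripletOf_iff.mp h
  have hlab : labels t = labels T ∩ {a, b, c} := by
    have h1 := labelsO_restrict T {a, b, c}
    rw [ht] at h1
    exact h1
  have hlab' : labels t = labels (tripletTree a b c) := labels_of_iso hiso
  have hgt : Good (tripletTree a b c) := by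
    apply good_of_iso hiso
    have h2 := good_restrict hg ({a, b, c} : Finset α)
    rw [ht] at h2
    exact h2
  obtain ⟨hab, hac, hbc⟩ := good_tripletTree hgt
  have hmem : ∀ x, x ∈ ({a, b, c} : Finset α) → x ∈ labels T := by
    intro x hx
    have : x ∈ labels t := by
      rw [hlab', labels_tripletTree]; exact hx
    rw [hlab] at this
    exact (Finset.mem_inter.mp this).1
  exact ⟨hmem a (by simp), hmem b (by simp), hmem c (by simp), hab, hac, hbc⟩

theorem triplet_trichotomy {T : LTree α} {a b c : α} (hg : Good T)
    (ha : a ∈ labels T) (hb : b ∈ labels T) (hc : c ∈ labels T)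
    (hab : a ≠ b) (hac : a ≠ c) (hbc : b ≠ c) :
    IsTripletOf T a b c ∨ IsTripletOf T a c b ∨ IsTripletOf T b c a := by
  have sacb : ({a, c, b} : Finset α) = {a, b, c} := by
    ext x; simp only [Finset.mem_insert, Finset.mem_singleton]; tauto
  have sbca : ({b, c, a} : Finset α) = {a, b, c} := by
    ext x; simp only [Finset.mem_insert, Finset.mem_singleton]; tauto
  cases ht : restrict T {a, b, c} with
  | none =>
    exfalso
    have h0 := restrict_eq_none_iff.mp ht
    have h1 : a ∈ labels T ∩ ({a, b, c} : Finset α) := by simp [ha]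
    rw [h0] at h1
    exact absurd h1 (Finset.notMem_empty a)
  | some t =>
    have hlab : labels t = {a, b, c} := by
      have h1 := labelsO_restrict T {a, b, c}
      rw [ht] at h1
      rw [show labelsO (some t) = labels t from rfl] at h1
      rw [h1]
      apply Finset.inter_eq_right.mpr
      intro x hx
      simp only [Finset.mem_insert, Finset.mem_singleton] at hx
      rcases hx with rfl | rfl | rfl <;> assumption
    have hgt : Good t := by
      have h2 := good_restrict hg ({a, b, c} : Finset α)
      rw [ht] at h2
      exact h2
    rcases good_card_three hgt hlab hab hac hbc with h | h | h
    · left; unfold IsTripletOf; rw [ht]; exact h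
    · right; left; unfold IsTripletOf; rw [sacb, ht]; exact h
    · right; right; unfold IsTripletOf; rw [sbca, ht]; exact h

theorem triplet_unique₁ {T : LTree α} {a b c : α} (hg : Good T)
    (h1 : IsTripletOf T a b c) (h2 : IsTripletOf T a c b) : False := by
  obtain ⟨-, -, -, hab, hac, hbc⟩ := triplet_facts hg h1
  obtain ⟨t, ht, hi1⟩ := isTripletOf_iff.mp h1
  obtain ⟨t', ht', hi2⟩ := isTripletOf_iff.mp h2
  rw [show ({a, c, b} : Finset α) = {a, b, c} from by
    ext x; simp only [Finset.mem_insert, Finset.mem_singleton]; tauto] at ht'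
  rw [ht] at ht'
  injection ht' with e
  subst e
  have hinv := iso_tripletTree_inv (iso_trans (iso_symm hi1) hi2)
  exact hbc hinv.2.symm

theorem triplet_unique₂ {T : LTree α} {a b c : α} (hg : Good T)
    (h1 : IsTripletOf T a b c) (h2 : IsTripletOf T b c a) : False := by
  obtain ⟨-, -, -, hab, hac, hbc⟩ := triplet_facts hg h1
  obtain ⟨t, ht, hi1⟩ := isTripletOf_iff.mp h1
  obtain ⟨t', ht', hi2⟩ := isTripletOf_iff.mp h2
  rw [show ({b, c, a} : Finset α) = {a, b, c} from by
    ext x; simp only [Finset.mem_insert, Finset.mem_singleton]; tauto] at ht'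
  rw [ht] at ht'
  injection ht' with e
  subst e
  have hinv := iso_tripletTree_inv (iso_trans (iso_symm hi1) hi2)
  exact hac hinv.2.symm

theorem isTripletOf_of_iso {T T' : LTree α} (h : Iso T T') {a b c : α}
    (ht : IsTripletOf T a b c) : IsTripletOf T' a b c := by
  unfold IsTripletOf at ht ⊢
  exact optIso_trans (optIso_symm (iso_restrict h {a, b, c})) ht

theorem triplet_left {l r : LTree α} {a b c : α} (hg : Good (node l r))
    (ha : a ∈ labels l) (hb : b ∈ labels l) (hab : a ≠ b) (hc : c ∈ labels r) :
    IsTripletOf (node l r) a b c := by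
  obtain ⟨g1, g2, hd⟩ := hg
  cases htl : restrict l {a, b, c} with
  | none =>
    exfalso
    have h0 := restrict_eq_none_iff.mp htl
    have h1 : a ∈ labels l ∩ ({a, b, c} : Finset α) := by simp [ha]
    rw [h0] at h1
    exact absurd h1 (Finset.notMem_empty a)
  | some tl =>
    cases htr : restrict r {a, b, c} with
    | none =>
      exfalso
      have h0 := restrict_eq_none_iff.mp htr
      have h1 : c ∈ labels r ∩ ({a, b, c} : Finset α) := by simp [hc]
      rw [h0] at h1
      exact absurd h1 (Finset.notMem_empty c)
    | some tr =>
      have hltl : labels tl = {a, b} := by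
        have h1 := labelsO_restrict l {a, b, c}
        rw [htl] at h1
        rw [show labelsO (some tl) = labels tl from rfl] at h1
        rw [h1]
        apply Finset.Subset.antisymm
        · intro x hx
          obtain ⟨hx1, hx2⟩ := Finset.mem_inter.mp hx
          simp only [Finset.mem_insert, Finset.mem_singleton] at hx2 ⊢
          rcases hx2 with h | h | rfl
          · exact Or.inl h
          · exact Or.inr h
          · exact absurd hc (Finset.disjoint_left.mp hd hx1)
        · intro x hx
          simp only [Finset.mem_insert, Finset.mem_singleton] at hx
          rcases hx with rfl | rfl <;> simp [ha, hb]
      have hltr : labels tr = {c} := by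
        have h1 := labelsO_restrict r {a, b, c}
        rw [htr] at h1
        rw [show labelsO (some tr) = labels tr from rfl] at h1
        rw [h1]
        apply Finset.Subset.antisymm
        · intro x hx
          obtain ⟨hx1, hx2⟩ := Finset.mem_inter.mp hx
          simp only [Finset.mem_insert, Finset.mem_singleton] at hx2 ⊢
          rcases hx2 with rfl | rfl | rfl
          · exact absurd hx1 (Finset.disjoint_left.mp hd ha)
          · exact absurd hx1 (Finset.disjoint_left.mp hd hb)
          · rfl
        · simp [hc]
      have hgtl : Good tl := by
        have h2 := good_restrict g1 ({a, b, c} : Finset α)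
        rw [htl] at h2
        exact h2
      have hgtr : Good tr := by
        have h2 := good_restrict g2 ({a, b, c} : Finset α)
        rw [htr] at h2
        exact h2
      have heq : restrict (node l r) {a, b, c} = some (node tl tr) := by
        rw [restrict_node, htl, htr]; rfl
      unfold IsTripletOf
      rw [heq]
      rw [good_singleton hgtr hltr]
      exact Iso.node (good_pair hgtl hltl hab) (Iso.leaf c)

theorem triplet_right {l r : LTree α} {a b c : α} (hg : Good (node l r))
    (ha : a ∈ labels r) (hb : b ∈ labels r) (hab : a ≠ b) (hc : c ∈ labels l) :
    IsTripletOf (node l r) a b c := by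
  obtain ⟨g1, g2, hd⟩ := hg
  have h := triplet_left (l := r) (r := l) ⟨g2, g1, hd.symm⟩ ha hb hab hc
  exact isTripletOf_of_iso (Iso.swap (iso_refl r) (iso_refl l)) h

theorem triplet_same_side {l r : LTree α} {a b c : α} (hg : Good (node l r))
    (h : IsTripletOf (node l r) a b c) :
    (a ∈ labels l ∧ b ∈ labels l) ∨ (a ∈ labels r ∧ b ∈ labels r) := by
  obtain ⟨-, -, -, hab, hac, hbc⟩ := triplet_facts hg h
  obtain ⟨g1, g2, hd⟩ := hg
  obtain ⟨t, ht, hi⟩ := isTripletOf_iff.mp h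
  rw [restrict_node] at ht
  have e1 := labelsO_restrict l ({a, b, c} : Finset α)
  have e2 := labelsO_restrict r ({a, b, c} : Finset α)
  cases htl : restrict l {a, b, c} with
  | none =>
    rw [htl] at ht
    cases htr : restrict r {a, b, c} with
    | none => rw [htr] at ht; exact absurd ht (by simp [glue])
    | some tr =>
      rw [htr] at ht
      have he : tr = t := by simpa [glue] using ht
      subst he
      rw [htr] at e2
      right
      have hmem : ∀ x, x ∈ ({a, b, c} : Finset α) → x ∈ labels r := by
        intro x hx
        have hx' : x ∈ labels tr := by
          rw [labels_of_iso hi, labels_tripletTree]; exact hx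
        rw [show labelsO (some tr) = labels tr from rfl] at e2
        rw [e2] at hx'
        exact (Finset.mem_inter.mp hx').1
      exact ⟨hmem a (by simp), hmem b (by simp)⟩
  | some tl =>
    rw [htl] at ht e1
    rw [show labelsO (some tl) = labels tl from rfl] at e1
    cases htr : restrict r {a, b, c} with
    | none =>
      rw [htr] at ht
      have he : tl = t := by simpa [glue] using ht
      subst he
      left
      have hmem : ∀ x, x ∈ ({a, b, c} : Finset α) → x ∈ labels l := by
        intro x hx
        have hx' : x ∈ labels tl := by
          rw [labels_of_iso hi, labels_tripletTree]; exact hx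
        rw [e1] at hx'
        exact (Finset.mem_inter.mp hx').1
      exact ⟨hmem a (by simp), hmem b (by simp)⟩
    | some tr =>
      rw [htr] at ht e2
      rw [show labelsO (some tr) = labels tr from rfl] at e2
      have he : node tl tr = t := by simpa [glue] using ht
      subst he
      rcases iso_node_tripletTree hi with ⟨el, er⟩ | ⟨el, er⟩
      · left
        constructor
        · have : a ∈ labels tl := by rw [el]; simp
          rw [e1] at this
          exact (Finset.mem_inter.mp this).1
        · have : b ∈ labels tl := by rw [el]; simp
          rw [e1] at this
          exact (Finset.mem_inter.mp this).1
      · right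
        constructor
        · have : a ∈ labels tr := by rw [er]; simp
          rw [e2] at this
          exact (Finset.mem_inter.mp this).1
        · have : b ∈ labels tr := by rw [er]; simp
          rw [e2] at this
          exact (Finset.mem_inter.mp this).1

theorem triplet_lift_left {l r : LTree α} {a b c : α} (hg : Good (node l r))
    (ha : a ∈ labels l) (hb : b ∈ labels l) (hc : c ∈ labels l) :
    IsTripletOf l a b c ↔ IsTripletOf (node l r) a b c := by
  obtain ⟨g1, g2, hd⟩ := hg
  have hrnone : restrict r {a, b, c} = none := by
    rw [restrict_eq_none_iff]
    rw [Finset.eq_empty_iff_forall_notMem]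
    intro x hx
    obtain ⟨hx1, hx2⟩ := Finset.mem_inter.mp hx
    simp only [Finset.mem_insert, Finset.mem_singleton] at hx2
    rcases hx2 with rfl | rfl | rfl
    · exact Finset.disjoint_left.mp hd ha hx1
    · exact Finset.disjoint_left.mp hd hb hx1
    · exact Finset.disjoint_left.mp hd hc hx1
  unfold IsTripletOf
  rw [restrict_node, hrnone, glue_none_right]

theorem triplet_lift_right {l r : LTree α} {a b c : α} (hg : Good (node l r))
    (ha : a ∈ labels r) (hb : b ∈ labels r) (hc : c ∈ labels r) :
    IsTripletOf r a b c ↔ IsTripletOf (node l r) a b c := by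
  obtain ⟨g1, g2, hd⟩ := hg
  rw [triplet_lift_left (l := r) (r := l) ⟨g2, g1, hd.symm⟩ ha hb hc]
  constructor
  · exact isTripletOf_of_iso (Iso.swap (iso_refl r) (iso_refl l))
  · exact isTripletOf_of_iso (Iso.swap (iso_refl l) (iso_refl r))

theorem child_labels_eq {l1 r1 l2 r2 : LTree α}
    (g1 : Good (node l1 r1)) (g2 : Good (node l2 r2))
    (htr : ∀ a b c : α, IsTripletOf (node l1 r1) a b c ↔ IsTripletOf (node l2 r2) a b c)
    {a : α} (ha1 : a ∈ labels l1) (ha2 : a ∈ labels l2) :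
    labels l1 = labels l2 := by
  have hd1 := g1.2.2
  have hd2 := g2.2.2
  ext b
  by_cases hba : b = a
  · subst hba; simp [ha1, ha2]
  constructor
  · intro hb1
    obtain ⟨c, hc⟩ := labels_nonempty r1
    have htrip : IsTripletOf (node l1 r1) a b c := triplet_left g1 ha1 hb1 (Ne.symm hba) hc
    have h2 := (htr a b c).mp htrip
    rcases triplet_same_side g2 h2 with ⟨-, hbl⟩ | ⟨ha', -⟩
    · exact hbl
    · exact absurd ha' (Finset.disjoint_left.mp hd2 ha2)
  · intro hb2
    obtain ⟨c, hc⟩ := labels_nonempty r2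
    have htrip : IsTripletOf (node l2 r2) a b c := triplet_left g2 ha2 hb2 (Ne.symm hba) hc
    have h1 := (htr a b c).mpr htrip
    rcases triplet_same_side g1 h1 with ⟨-, hbl⟩ | ⟨ha', -⟩
    · exact hbl
    · exact absurd ha' (Finset.disjoint_left.mp hd1 ha1)

theorem iso_of_triplet_subset : ∀ (n : ℕ) (S1 S2 : LTree α), (labels S1).card ≤ n →
    Good S1 → Good S2 → labels S1 = labels S2 →
    (∀ a b c : α, IsTripletOf S1 a b c → IsTripletOf S2 a b c) → Iso S1 S2 := by
  intro n
  induction n with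
  | zero =>
    intro S1 S2 hcard _ _ _ _
    exfalso
    have := (labels_nonempty S1).card_pos
    omega
  | succ n ih =>
    intro S1 S2 hcard hg1 hg2 hlab htr
    have htr' : ∀ a b c : α, IsTripletOf S1 a b c ↔ IsTripletOf S2 a b c := by
      intro a b c
      refine ⟨htr a b c, fun h2 => ?_⟩
      obtain ⟨ha, hb, hc, hab, hac, hbc⟩ := triplet_facts hg2 h2
      rw [← hlab] at ha hb hc
      rcases triplet_trichotomy hg1 ha hb hc hab hac hbc with h | h | h
      · exact h
      · exact absurd (htr _ _ _ h) fun h' => triplet_unique₁ hg2 h2 h'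
      · exact absurd (htr _ _ _ h) fun h' => triplet_unique₂ hg2 h2 h'
    cases S1 with
    | leaf x =>
      have hx : S2 = leaf x := good_singleton hg2 (by rw [← hlab]; rfl)
      rw [hx]
      exact Iso.leaf x
    | node l1 r1 =>
      cases S2 with
      | leaf y =>
        exfalso
        have hly : node l1 r1 = leaf y := good_singleton hg1 (by rw [hlab]; rfl)
        exact absurd hly (by simp)
      | node l2 r2 =>
        obtain ⟨a, ha2⟩ := labels_nonempty l2
        have ha1' : a ∈ labels l1 ∪ labels r1 := by
          have : a ∈ labels (node l2 r2) := Finset.mem_union_left _ ha2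
          rw [← hlab] at this
          exact this
        have hd1 := hg1.2.2
        have hd2 := hg2.2.2
        have g1l := hg1.1
        have g1r := hg1.2.1
        have g2l := hg2.1
        have g2r := hg2.2.1
        have hcard1 : (labels l1).card + (labels r1).card ≤ n + 1 := by
          rw [← Finset.card_union_of_disjoint hd1]
          exact hcard
        have hposl := (labels_nonempty l1).card_pos
        have hposr := (labels_nonempty r1).card_pos
        rcases Finset.mem_union.mp ha1' with ha1 | ha1
        · have el : labels l1 = labels l2 := child_labels_eq hg1 hg2 htr' ha1 ha2
          have er : labels r1 = labels r2 := by
            ext x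
            constructor
            · intro hx
              have hx' : x ∈ labels l2 ∪ labels r2 := by
                have : x ∈ labels (node l1 r1) := Finset.mem_union_right _ hx
                rw [hlab] at this
                exact this
              rcases Finset.mem_union.mp hx' with hx2 | hx2
              · rw [← el] at hx2
                exact absurd hx (Finset.disjoint_left.mp hd1 hx2)
              · exact hx2
            · intro hx
              have hx' : x ∈ labels l1 ∪ labels r1 := by
                have : x ∈ labels (node l2 r2) := Finset.mem_union_right _ hx
                rw [← hlab] at this
                exact this
              rcases Finset.mem_union.mp hx' with hx2 | hx2
              · rw [el] at hx2
                exact absurd hx (Finset.disjoint_left.mp hd2 hx2)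
              · exact hx2
          have il : Iso l1 l2 := by
            apply ih l1 l2 (by omega) g1l g2l el
            intro a' b' c' h
            obtain ⟨ma, mb, mc, -, -, -⟩ := triplet_facts g1l h
            have h1 := (triplet_lift_left hg1 ma mb mc).mp h
            have h2 := (htr' a' b' c').mp h1
            exact (triplet_lift_left hg2 (el ▸ ma) (el ▸ mb) (el ▸ mc)).mpr h2
          have ir : Iso r1 r2 := by
            apply ih r1 r2 (by omega) g1r g2r er
            intro a' b' c' h
            obtain ⟨ma, mb, mc, -, -, -⟩ := triplet_facts g1r h
            have h1 := (triplet_lift_right hg1 ma mb mc).mp h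
            have h2 := (htr' a' b' c').mp h1
            exact (triplet_lift_right hg2 (er ▸ ma) (er ▸ mb) (er ▸ mc)).mpr h2
          exact Iso.node il ir
        · have hgswap : Good (node r1 l1) := ⟨g1r, g1l, hd1.symm⟩
          have htr'' : ∀ a b c : α,
              IsTripletOf (node r1 l1) a b c ↔ IsTripletOf (node l2 r2) a b c := by
            intro a b c
            refine Iff.trans ⟨?_, ?_⟩ (htr' a b c)
            · exact isTripletOf_of_iso (Iso.swap (iso_refl r1) (iso_refl l1))
            · exact isTripletOf_of_iso (Iso.swap (iso_refl l1) (iso_refl r1))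
          have el : labels r1 = labels l2 := child_labels_eq hgswap hg2 htr'' ha1 ha2
          have er : labels l1 = labels r2 := by
            ext x
            constructor
            · intro hx
              have hx' : x ∈ labels l2 ∪ labels r2 := by
                have : x ∈ labels (node l1 r1) := Finset.mem_union_left _ hx
                rw [hlab] at this
                exact this
              rcases Finset.mem_union.mp hx' with hx2 | hx2
              · rw [← el] at hx2
                exact absurd hx2 (Finset.disjoint_left.mp hd1 hx)
              · exact hx2
            · intro hx
              have hx' : x ∈ labels l1 ∪ labels r1 := by
                have : x ∈ labels (node l2 r2) := Finset.mem_union_right _ hx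
                rw [← hlab] at this
                exact this
              rcases Finset.mem_union.mp hx' with hx2 | hx2
              · exact hx2
              · rw [el] at hx2
                exact absurd hx (Finset.disjoint_left.mp hd2 hx2)
          have il : Iso l1 r2 := by
            apply ih l1 r2 (by omega) g1l g2r er
            intro a' b' c' h
            obtain ⟨ma, mb, mc, -, -, -⟩ := triplet_facts g1l h
            have h1 := (triplet_lift_left hg1 ma mb mc).mp h
            have h2 := (htr' a' b' c').mp h1
            exact (triplet_lift_right hg2 (er ▸ ma) (er ▸ mb) (er ▸ mc)).mpr h2
          have ir : Iso r1 l2 := by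
            apply ih r1 l2 (by omega) g1r g2l el
            intro a' b' c' h
            obtain ⟨ma, mb, mc, -, -, -⟩ := triplet_facts g1r h
            have h1 := (triplet_lift_right hg1 ma mb mc).mp h
            have h2 := (htr' a' b' c').mp h1
            exact (triplet_lift_left hg2 (el ▸ ma) (el ▸ mb) (el ▸ mc)).mpr h2
          exact Iso.swap il ir

end LTree
end Aux

open LTree

/-- Lemma 14 of the paper.  For trees `T₁, T₂` on the same
label set `𝒳` and `X ⊆ 𝒳`: `T₁ − X = T₂ − X` iff `X` is a hitting set of
`confset(T₁,T₂)`. -/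
theorem remove_eq_iff_hitting_set {α : Type u} [DecidableEq α] (𝒳 : Finset α)
    (T₁ T₂ : LTree α) (h₁ : IsTreeOn T₁ 𝒳) (h₂ : IsTreeOn T₂ 𝒳)
    (X : Finset α) (hX : X ⊆ 𝒳) :
    OptIso (remove T₁ X) (remove T₂ X) ↔
      ∀ s ∈ confset T₁ T₂, ∃ y ∈ X, y ∈ s := by
  constructor
  · intro hopt s hs
    obtain ⟨a, b, c, rfl, h1, h2⟩ := hs
    by_contra hno
    push_neg at hno
    obtain ⟨ha1, hb1, hc1, hab, hac, hbc⟩ := triplet_facts h₁.1 h1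
    have hsub : ({a, b, c} : Finset α) ⊆ 𝒳 \ X := by
      intro x hx
      rw [Finset.mem_sdiff]
      refine ⟨?_, fun hxX => hno x hxX hx⟩
      rw [← h₁.2]
      simp only [Finset.mem_insert, Finset.mem_singleton] at hx
      rcases hx with rfl | rfl | rfl <;> assumption
    have key : ∀ T : LTree α, labels T = 𝒳 →
        restrictO (remove T X) {a, b, c} = restrict T {a, b, c} := by
      intro T hT
      show restrictO (restrict T (labels T \ X)) {a, b, c} = _
      rw [restrictO_restrict, hT, Finset.inter_eq_right.mpr hsub]
    have hres : OptIso (restrict T₁ ({a, b, c} : Finset α)) (restrict T₂ {a, b, c}) := by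
      rw [← key T₁ h₁.2, ← key T₂ h₂.2]
      exact restrictO_optIso hopt _
    have sacb : ({a, c, b} : Finset α) = {a, b, c} := by
      ext x; simp only [Finset.mem_insert, Finset.mem_singleton]; tauto
    have sbca : ({b, c, a} : Finset α) = {a, b, c} := by
      ext x; simp only [Finset.mem_insert, Finset.mem_singleton]; tauto
    rcases h2 with h2 | h2
    · refine triplet_unique₁ h₁.1 h1 ?_
      unfold IsTripletOf at h2 ⊢
      rw [sacb] at h2 ⊢
      exact optIso_trans hres h2
    · refine triplet_unique₂ h₁.1 h1 ?_
      unfold IsTripletOf at h2 ⊢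
      rw [sbca] at h2 ⊢
      exact optIso_trans hres h2
  · intro hhit
    show OptIso (restrict T₁ (labels T₁ \ X)) (restrict T₂ (labels T₂ \ X))
    rw [h₁.2, h₂.2]
    cases hr1 : restrict T₁ (𝒳 \ X) with
    | none =>
      have h0 := restrict_eq_none_iff.mp hr1
      have h2none : restrict T₂ (𝒳 \ X) = none := by
        rw [restrict_eq_none_iff, h₂.2]
        rw [h₁.2] at h0
        exact h0
      rw [h2none]
      trivial
    | some S1 =>
      cases hr2 : restrict T₂ (𝒳 \ X) with
      | none =>
        exfalso
        have h0 := restrict_eq_none_iff.mp hr2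
        rw [h₂.2] at h0
        have e1 := labelsO_restrict T₁ (𝒳 \ X)
        rw [hr1, h₁.2] at e1
        rw [show labelsO (some S1) = labels S1 from rfl] at e1
        rw [h0] at e1
        exact (labels_nonempty S1).ne_empty e1
      | some S2 =>
        have g1 : Good S1 := by
          have := good_restrict h₁.1 (𝒳 \ X); rw [hr1] at this; exact this
        have g2 : Good S2 := by
          have := good_restrict h₂.1 (𝒳 \ X); rw [hr2] at this; exact this
        have lab1 : labels S1 = 𝒳 \ X := by
          have e1 := labelsO_restrict T₁ (𝒳 \ X)
          rw [hr1, h₁.2] at e1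
          rw [show labelsO (some S1) = labels S1 from rfl] at e1
          rw [e1]
          exact Finset.inter_eq_right.mpr Finset.sdiff_subset
        have lab2 : labels S2 = 𝒳 \ X := by
          have e2 := labelsO_restrict T₂ (𝒳 \ X)
          rw [hr2, h₂.2] at e2
          rw [show labelsO (some S2) = labels S2 from rfl] at e2
          rw [e2]
          exact Finset.inter_eq_right.mpr Finset.sdiff_subset
        refine iso_of_triplet_subset (labels S1).card S1 S2 le_rfl g1 g2
          (lab1.trans lab2.symm) ?_
        intro a b c h
        obtain ⟨ma, mb, mc, hab, hac, hbc⟩ := triplet_facts g1 h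
        rw [lab1] at ma mb mc
        have hsub : ({a, b, c} : Finset α) ⊆ 𝒳 \ X := by
          intro x hx
          simp only [Finset.mem_insert, Finset.mem_singleton] at hx
          rcases hx with rfl | rfl | rfl <;> assumption
        have key : ∀ T S : LTree α, restrict T (𝒳 \ X) = some S →
            restrict S {a, b, c} = restrict T {a, b, c} := by
          intro T S hres
          have hcomp := restrictO_restrict T (𝒳 \ X) {a, b, c}
          rw [hres] at hcomp
          rw [show restrictO (some S) ({a, b, c} : Finset α) = restrict S {a, b, c}
            from rfl] at hcomp
          rw [hcomp, Finset.inter_eq_right.mpr hsub]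
        have hT1 : IsTripletOf T₁ a b c := by
          unfold IsTripletOf at h ⊢
          rw [← key T₁ S1 hr1]
          exact h
        have ma2 : a ∈ labels T₂ := by rw [h₂.2]; exact (Finset.mem_sdiff.mp ma).1
        have mb2 : b ∈ labels T₂ := by rw [h₂.2]; exact (Finset.mem_sdiff.mp mb).1
        have mc2 : c ∈ labels T₂ := by rw [h₂.2]; exact (Finset.mem_sdiff.mp mc).1
        rcases triplet_trichotomy h₂.1 ma2 mb2 mc2 hab hac hbc with h2 | h2 | h2
        · unfold IsTripletOf at h2 ⊢
          rw [key T₂ S2 hr2]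
          exact h2
        · exfalso
          have hcs : ({a, b, c} : Finset α) ∈ confset T₁ T₂ :=
            ⟨a, b, c, rfl, hT1, Or.inl h2⟩
          obtain ⟨y, hyX, hy3⟩ := hhit _ hcs
          exact (Finset.mem_sdiff.mp (hsub hy3)).2 hyX
        · exfalso
          have hcs : ({a, b, c} : Finset α) ∈ confset T₁ T₂ :=
            ⟨a, b, c, rfl, hT1, Or.inr h2⟩
          obtain ⟨y, hyX, hy3⟩ := hhit _ hcs
          exact (Finset.mem_sdiff.mp (hsub hy3)).2 hyX
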